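/- arXiv:1712.09056 — 5 statements merged into one kernel-verified Lean document; each statement's English description precedes it below -/
import Mathlib

section
/- Let A be an algebra, θ an equivalence relation on A, and syn(θ) the syntactic congruence of θ (the largest congruence of A contained in θ). For any set F of terms (with distinguished variable x), and for all a, b ∈ A: (a,b) ∈ θ_F if and only if (a/syn(θ), b/syn(θ)) ∈ (θ/syn(θ))_F, where θ/syn(θ) is the quotient equivalence relation on A/syn(θ) and the subscript F on the quotient side is computed using the translations induced by F on the quotient algebra A/syn(θ). -/
open FirstOrder FirstOrder.Language
universe u

def translation {L : Language} {A : Type u} [L.Structure A]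
    (t : L.Term (ℕ ⊕ Fin 1)) (e : ℕ → A) (a : A) : A :=
  t.realize (Sum.elim e fun _ => a)

def relSub {L : Language} {A : Type u} [L.Structure A]
    (F : Set (L.Term (ℕ ⊕ Fin 1))) (θ : A → A → Prop) (a b : A) : Prop :=
  ∀ t ∈ F, ∀ e : ℕ → A, θ (translation t e a) (translation t e b)

def synRel (L : Language) {A : Type u} [L.Structure A] (θ : A → A → Prop) (a b : A) : Prop :=
  ∀ (t : L.Term (ℕ ⊕ Fin 1)) (e : ℕ → A), θ (translation t e a) (translation t e b)

def IsCongruence (L : Language) (A : Type u) [L.Structure A] (r : A → A → Prop) : Prop :=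
  Equivalence r ∧ ∀ {n : ℕ} (f : L.Functions n) (x y : Fin n → A),
    (∀ i, r (x i) (y i)) → r (Structure.funMap f x) (Structure.funMap f y)

def prinCon (L : Language) {A : Type u} [L.Structure A] (a b c d : A) : Prop :=
  ∀ r : A → A → Prop, IsCongruence L A r → r a b → r c d

def chainSat {L : Language} {A : Type u} [L.Structure A] (n : ℕ)
    (ts : Fin (n + 1) → L.Term (ℕ ⊕ Fin 1)) (zb : Fin (n + 1) → Bool)
    (e : ℕ → A) (c d a b : A) : Prop :=
  (c = translation (ts 0) e (if zb 0 then b else a)) ∧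
  (∀ i : Fin n,
      translation (ts i.castSucc) e (if zb i.castSucc then a else b) =
        translation (ts i.succ) e (if zb i.succ then b else a)) ∧
  translation (ts (Fin.last n)) e (if zb (Fin.last n) then a else b) = d

def thetaSup {L : Language} {A : Type u} [L.Structure A]
    (F : Set (L.Term (ℕ ⊕ Fin 1))) (a b c d : A) : Prop :=
  ∃ (n : ℕ) (ts : Fin (n + 1) → L.Term (ℕ ⊕ Fin 1)) (zb : Fin (n + 1) → Bool) (e : ℕ → A),
    (∀ i, ts i ∈ F) ∧ chainSat n ts zb e c d a b

structure CongFormula (L : Language) where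
  n : ℕ
  ts : Fin (n + 1) → L.Term (ℕ ⊕ Fin 1)
  zb : Fin (n + 1) → Bool

def CongFormula.Sat {L : Language} {A : Type u} [L.Structure A]
    (π : CongFormula L) (c d a b : A) : Prop :=
  ∃ e : ℕ → A, chainSat π.n π.ts π.zb e c d a b

def CongFormula.terms {L : Language} (π : CongFormula L) : Set (L.Term (ℕ ⊕ Fin 1)) :=
  Set.range π.ts

def compTerm {L : Language} (s t : L.Term (ℕ ⊕ Fin 1)) : L.Term (ℕ ⊕ Fin 1) :=
  s.subst fun v => match v with
    | Sum.inl n => Term.var (Sum.inl (2 * n))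
    | Sum.inr _ => t.relabel (Sum.map (fun n => 2 * n + 1) id)


lemma realize_quot {L : Language} {A : Type u} [L.Structure A]
    (s : Setoid A) [L.Structure (Quotient s)]
    (hcom : ∀ (n : ℕ) (g : L.Functions n) (x : Fin n → A),
      Structure.funMap g (fun i => Quotient.mk s (x i)) = Quotient.mk s (Structure.funMap g x))
    {α : Type*} (t : L.Term α) (env : α → A) :
    t.realize (fun v => Quotient.mk s (env v)) = Quotient.mk s (t.realize env) := by
  induction t with
  | var v => rfl
  | func g ts ih =>
    simp only [Term.realize]
    rw [show (fun i => (ts i).realize (fun v => Quotient.mk s (env v)))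
        = fun i => Quotient.mk s ((ts i).realize env) from funext fun i => ih i]
    exact hcom _ g _

/-- `(a,b) ∈ θ_F` iff `(a/syn(θ), b/syn(θ)) ∈ (θ/syn(θ))_F`, where `syn(θ)` is the
syntactic congruence of `θ` and `θ/syn(θ)` is the quotient equivalence relation on the
quotient algebra `A/syn(θ)`. -/
theorem stmt_4 {L : Language} {A : Type u} [L.Structure A]
    (θ : A → A → Prop) (hθ : Equivalence θ)
    (s : Setoid A) (hs : ∀ a b : A, s.r a b ↔ synRel L θ a b)
    [L.Structure (Quotient s)]
    (hcom : ∀ (n : ℕ) (g : L.Functions n) (x : Fin n → A),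
      Structure.funMap g (fun i => Quotient.mk s (x i)) = Quotient.mk s (Structure.funMap g x))
    (F : Set (L.Term (ℕ ⊕ Fin 1))) (a b : A) :
    relSub F θ a b ↔
      relSub F
        (fun qa qb : Quotient s =>
          ∃ a' b' : A, Quotient.mk s a' = qa ∧ Quotient.mk s b' = qb ∧ θ a' b')
        (Quotient.mk s a) (Quotient.mk s b) := by
  have key : ∀ (t : L.Term (ℕ ⊕ Fin 1)) (e : ℕ → A) (c : A),
      translation t (fun n => Quotient.mk s (e n)) (Quotient.mk s c)
        = Quotient.mk s (translation t e c) := by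
    intro t e c
    have h2 := realize_quot s hcom t (Sum.elim e fun _ => c)
    unfold translation
    rw [← h2]
    congr 1
    funext v; cases v <;> rfl
  constructor
  · intro h t ht e'
    have he : e' = fun n => Quotient.mk s ((e' n).out) := by
      funext n; exact ((e' n).out_eq).symm
    refine ⟨translation t (fun n => (e' n).out) a, translation t (fun n => (e' n).out) b,
      ?_, ?_, h t ht _⟩
    · rw [← key, ← he]
    · rw [← key, ← he]
  · intro h t ht e
    obtain ⟨a', b', ha, hb, hab⟩ := h t ht (fun n => Quotient.mk s (e n))
    rw [key] at ha hb
    have ha' : synRel L θ a' (translation t e a) := (hs _ _).mp (Quotient.exact ha)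
    have hb' : synRel L θ b' (translation t e b) := (hs _ _).mp (Quotient.exact hb)
    have ha2 : θ a' (translation t e a) := ha' (Term.var (Sum.inr 0)) e
    have hb2 : θ b' (translation t e b) := hb' (Term.var (Sum.inr 0)) e
    exact hθ.trans (hθ.trans (hθ.symm ha2) hab) hb2
end

section
/- Let C be a class of algebras (of a fixed signature) closed under homomorphic images, and let F, G be sets of terms. If the pair (F, G) determines principal subcongruences in C, then the set G∘F (all compositions s(t(x, q̄), p̄) with s ∈ G, t ∈ F) determines syntactic congruences in C; that is, for every A ∈ C and every equivalence relation θ on A, syn(θ) = θ_{G∘F}. -/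
open FirstOrder FirstOrder.Language
universe u

section AuxPS
variable {L : Language} {A : Type u} [L.Structure A]

def ilv {A : Type u} (e₁ e₂ : ℕ → A) : ℕ → A := fun n =>
  if n % 2 = 0 then e₁ (n / 2) else e₂ (n / 2)

lemma translation_compTerm (s t : L.Term (ℕ ⊕ Fin 1)) (e₁ e₂ : ℕ → A) (a : A) :
    translation (compTerm s t) (ilv e₁ e₂) a = translation s e₁ (translation t e₂ a) := by
  unfold translation compTerm
  rw [Term.realize_subst]
  congr 1
  funext v
  cases v with
  | inl n =>
    simp only [Term.realize_var, Sum.elim_inl, ilv]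
    have h1 : 2 * n % 2 = 0 := by omega
    have h2 : 2 * n / 2 = n := by omega
    simp [h1, h2]
  | inr i =>
    simp only [Sum.elim_inr, Term.realize_relabel]
    congr 1
    funext w
    cases w with
    | inl n =>
      simp only [Function.comp_apply, Sum.map_inl, Sum.elim_inl, ilv]
      have h1 : ¬ (2 * n + 1) % 2 = 0 := by omega
      have h2 : (2 * n + 1) / 2 = n := by omega
      simp [h1, h2]
    | inr j => simp

lemma congr_translation {r : A → A → Prop} (hr : IsCongruence L A r) {a b : A}
    (h : r a b) (t : L.Term (ℕ ⊕ Fin 1)) (e : ℕ → A) :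
    r (translation t e a) (translation t e b) := by
  induction t with
  | var v =>
    cases v with
    | inl n => exact hr.1.refl _
    | inr i => exact h
  | func f ts ih => exact hr.2 f _ _ fun i => ih i

lemma synRel_equiv {θ : A → A → Prop} (hθ : Equivalence θ) : Equivalence (synRel L θ) :=
  ⟨fun _ _ _ => hθ.refl _, fun h t e => hθ.symm (h t e),
    fun h1 h2 t e => hθ.trans (h1 t e) (h2 t e)⟩

lemma synRel_le {θ : A → A → Prop} {x y : A} (h : synRel L θ x y) : θ x y :=
  h (Term.var (Sum.inr 0)) (fun _ => x)

lemma synRel_isCongruence (θ : A → A → Prop) (hθ : Equivalence θ) :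
    IsCongruence L A (synRel L θ) := by
  refine ⟨synRel_equiv hθ, ?_⟩
  intro n f x y h
  set z : ℕ → Fin n → A := fun k i => if (i : ℕ) < k then y i else x i with hz
  have step : ∀ k, k < n →
      synRel L θ (Structure.funMap f (z k)) (Structure.funMap f (z (k+1))) := by
    intro k hk
    set kk : Fin n := ⟨k, hk⟩ with hkk
    set u : L.Term (ℕ ⊕ Fin 1) := Term.func f (fun j =>
      if (j : ℕ) = k then Term.var (Sum.inr 0) else Term.var (Sum.inl (j : ℕ))) with hu
    set ε : ℕ → A := fun m => if hm : m < n then z k ⟨m, hm⟩ else x kk with hε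
    have key : ∀ (v : A) (w : Fin n → A), (∀ j : Fin n, (j : ℕ) ≠ k → w j = z k j) →
        (w kk = v) → translation u ε v = Structure.funMap f w := by
      intro v w hw hv
      show Structure.funMap f _ = _
      congr 1
      funext j
      show Term.realize (Sum.elim ε fun _ => v)
        (if (j : ℕ) = k then (Term.var (Sum.inr 0) : L.Term (ℕ ⊕ Fin 1))
          else Term.var (Sum.inl (j : ℕ))) = w j
      by_cases hj : (j : ℕ) = k
      · have : j = kk := Fin.ext hj
        subst this
        rw [if_pos hj]
        simp only [Term.realize_var, Sum.elim_inr]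
        exact hv.symm
      · rw [if_neg hj]
        simp only [Term.realize_var, Sum.elim_inl]
        rw [hw j hj, hε]
        simp [j.isLt]
    have h1 : translation u ε (x kk) = Structure.funMap f (z k) := by
      refine key _ _ (fun j _ => rfl) ?_
      show z k kk = x kk
      simp [hz, hkk]
    have h2 : translation u ε (y kk) = Structure.funMap f (z (k+1)) := by
      refine key _ _ ?_ ?_
      · intro j hj
        show z (k+1) j = z k j
        simp only [hz]
        by_cases h' : (j : ℕ) < k
        · rw [if_pos h', if_pos (by omega)]
        · rw [if_neg h', if_neg (by omega)]
      · show z (k+1) kk = y kk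
        simp [hz, hkk]
    intro t e
    rw [← h1, ← h2, ← translation_compTerm, ← translation_compTerm]
    exact h kk (compTerm t u) (ilv e ε)
  have main : ∀ k, k ≤ n → synRel L θ (Structure.funMap f x) (Structure.funMap f (z k)) := by
    intro k
    induction k with
    | zero =>
      intro _
      have hz0 : z 0 = x := by funext i; simp [hz]
      rw [hz0]
      exact (synRel_equiv hθ).refl _
    | succ k ih =>
      intro hk
      exact (synRel_equiv hθ).trans (ih (by omega)) (step k (by omega))
  have hzn : z n = y := by funext i; simp [hz, i.isLt]
  have := main n le_rfl
  rwa [hzn] at this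

lemma chain_rel {θ' : A → A → Prop} (hE : Equivalence θ') {n : ℕ}
    {ts : Fin (n + 1) → L.Term (ℕ ⊕ Fin 1)} {zb : Fin (n + 1) → Bool} {e : ℕ → A}
    {c d a b : A} (h : chainSat n ts zb e c d a b)
    (hall : ∀ i, θ' (translation (ts i) e a) (translation (ts i) e b)) : θ' c d := by
  obtain ⟨h0, hlink, hlast⟩ := h
  have swap : ∀ i : Fin (n + 1),
      θ' (translation (ts i) e (if zb i then b else a))
        (translation (ts i) e (if zb i then a else b)) := by
    intro i
    cases hzb : zb i
    · simpa [hzb] using hall i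
    · simpa [hzb] using hE.symm (hall i)
  have main : ∀ i : Fin (n + 1), θ' c (translation (ts i) e (if zb i then a else b)) := by
    intro i
    induction i using Fin.induction with
    | zero => rw [h0]; exact swap 0
    | succ i ih => exact hE.trans ih (by rw [hlink i]; exact swap i.succ)
  have := main (Fin.last n)
  rwa [hlast] at this

lemma chain_comp {n : ℕ} {ts : Fin (n + 1) → L.Term (ℕ ⊕ Fin 1)} {zb : Fin (n + 1) → Bool}
    {e : ℕ → A} {c d a b : A} (h : chainSat n ts zb e c d a b)
    (g : L.Term (ℕ ⊕ Fin 1)) (ε : ℕ → A) :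
    chainSat n (fun i => compTerm g (ts i)) zb (ilv ε e)
      (translation g ε c) (translation g ε d) a b := by
  obtain ⟨h0, hlink, hlast⟩ := h
  refine ⟨?_, ?_, ?_⟩
  · rw [translation_compTerm]; exact congrArg _ h0
  · intro i; rw [translation_compTerm, translation_compTerm]; exact congrArg _ (hlink i)
  · rw [translation_compTerm]; exact congrArg _ hlast

lemma prinCon_isCongruence (c d : A) : IsCongruence L A (prinCon L c d) := by
  refine ⟨⟨fun x r hr _ => hr.1.refl x, fun h r hr hcd => hr.1.symm (h r hr hcd),
    fun h1 h2 r hr hcd => hr.1.trans (h1 r hr hcd) (h2 r hr hcd)⟩, ?_⟩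
  intro n f x y h r hr hcd
  exact hr.2 f x y fun i => h i r hr hcd

lemma cong_le_syn {θ r : A → A → Prop} (hr : IsCongruence L A r)
    (hle : ∀ x y, r x y → θ x y) {x y : A} (h : r x y) : synRel L θ x y :=
  fun t e => hle _ _ (congr_translation hr h t e)

lemma hom_translation {B' : Type u} [L.Structure B'] (π : L.Hom A B')
    (t : L.Term (ℕ ⊕ Fin 1)) (e : ℕ → A) (a : A) :
    π (translation t e a) = translation t (⇑π ∘ e) (π a) := by
  unfold translation
  rw [← HomClass.realize_term π]
  congr 1
  funext v; cases v <;> rfl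

lemma pullback_congruence {B' : Type u} [L.Structure B'] (π : L.Hom A B') (R : B' → B' → Prop)
    (hR : IsCongruence L B' R) : IsCongruence L A (fun x y => R (π x) (π y)) := by
  refine ⟨⟨fun _ => hR.1.refl _, fun h => hR.1.symm h, fun h1 h2 => hR.1.trans h1 h2⟩, ?_⟩
  intro n f x y h
  show R (π (Structure.funMap f x)) (π (Structure.funMap f y))
  rw [π.map_fun, π.map_fun]
  exact hR.2 f _ _ h

variable (s : Setoid A)

lemma mk_out' (a : A) : s.r ((Quotient.mk s a).out) a :=
  Quotient.exact (Quotient.out_eq _)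

noncomputable def quotStructure (hs : IsCongruence L A s.r) : L.Structure (Quotient s) where
  funMap {n} f x := Quotient.mk s (Structure.funMap f fun i => (x i).out)
  RelMap {n} r x := ∃ y : Fin n → A, (∀ i, Quotient.mk s (y i) = x i) ∧ Structure.RelMap r y

def quotHom (hs : IsCongruence L A s.r) :
    @Language.Hom L A (Quotient s) _ (quotStructure s hs) :=
  letI := quotStructure s hs
  { toFun := Quotient.mk s
    map_fun' := fun {n} f x => Quotient.sound (hs.2 f x (fun i => (Quotient.mk s (x i)).out)
      (fun i => hs.1.symm (mk_out' s (x i))))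
    map_rel' := fun {n} r x hx => ⟨x, fun i => rfl, hx⟩ }

end AuxPS

/-- If a class `C` of algebras closed under homomorphic images has principal
subcongruences determined by the pair `(F, G)` of sets of terms, then `G∘F` determines
syntactic congruences in `C`: for every `A ∈ C` and every equivalence relation `θ` on
`A`, `syn(θ) = θ_{G∘F}`. -/
theorem stmt_8 {L : Language} (C : (A : Type u) → [inst : L.Structure A] → Prop)
    (hC : ∀ (A B : Type u) [L.Structure A] [L.Structure B],
      C A → ∀ f : L.Hom A B, Function.Surjective f → C B)
    (F G : Set (L.Term (ℕ ⊕ Fin 1)))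
    (hFG : ∀ (A : Type u) [L.Structure A], C A → ∀ a b : A, a ≠ b →
      ∃ c d : A, c ≠ d ∧ thetaSup F a b c d ∧
        ∀ e f : A, prinCon L c d e f ↔ thetaSup G c d e f) :
    ∀ (A : Type u) [L.Structure A], C A → ∀ θ : A → A → Prop, Equivalence θ →
      ∀ a b : A,
        synRel L θ a b ↔
          relSub {w : L.Term (ℕ ⊕ Fin 1) | ∃ s ∈ G, ∃ t ∈ F, w = compTerm s t} θ a b := by
  intro A _ hA θ hθ a b
  constructor
  · intro h t _ e
    exact h t e
  · intro hGF
    have hψ : IsCongruence L A (synRel L θ) := synRel_isCongruence θ hθ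
    by_contra hsyn
    unfold synRel at hsyn
    push_neg at hsyn
    obtain ⟨t₀, e₀, ht₀⟩ := hsyn
    have hab : ¬ synRel L θ a b := fun hp => ht₀ (hp t₀ e₀)
    -- quotient
    set s : Setoid A := ⟨synRel L θ, hψ.1⟩ with hs
    letI : L.Structure (Quotient s) := quotStructure s hψ
    set π : L.Hom A (Quotient s) := quotHom s hψ with hπ
    have hπfun : ∀ x : A, π x = Quotient.mk s x := fun _ => rfl
    have hπsurj : Function.Surjective π := fun q => ⟨q.out, Quotient.out_eq q⟩
    have hB : C (Quotient s) := hC A (Quotient s) hA π hπsurj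
    have hne : Quotient.mk s a ≠ Quotient.mk s b := fun h => hab (Quotient.exact h)
    obtain ⟨c, d, hcd, hF, hG⟩ := hFG (Quotient s) hB (Quotient.mk s a) (Quotient.mk s b) hne
    -- θ-bar on the quotient
    set θb : Quotient s → Quotient s → Prop := fun u v => θ u.out v.out with hθbdef
    have hψθ : ∀ x y : A, synRel L θ x y → θ x y := fun _ _ h => synRel_le h
    have hθb : Equivalence θb :=
      ⟨fun _ => hθ.refl _, fun h => hθ.symm h, fun h1 h2 => hθ.trans h1 h2⟩
    have hmk : ∀ x y : A, θb (Quotient.mk s x) (Quotient.mk s y) ↔ θ x y := by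
      intro x y
      have hx : θ ((Quotient.mk s x).out) x := hψθ _ _ (mk_out' s x)
      have hy : θ ((Quotient.mk s y).out) y := hψθ _ _ (mk_out' s y)
      exact ⟨fun h => hθ.trans (hθ.trans (hθ.symm hx) h) hy,
        fun h => hθ.trans (hθ.trans hx h) (hθ.symm hy)⟩
    -- Step 1: find p q with prinCon c d p q but not θb p q
    have step1 : ∃ p q : Quotient s, prinCon L c d p q ∧ ¬ θb p q := by
      by_contra hno
      push_neg at hno
      have hr' : IsCongruence L A (fun x y => prinCon L c d (π x) (π y)) :=
        pullback_congruence π _ (prinCon_isCongruence c d)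
      have hle : ∀ x y : A, prinCon L c d (π x) (π y) → θ x y := by
        intro x y h
        exact (hmk x y).1 (hno _ _ h)
      have hcc : prinCon L c d (π c.out) (π d.out) := by
        rw [hπfun, hπfun, Quotient.out_eq, Quotient.out_eq]
        exact fun r hr h => h
      have : synRel L θ c.out d.out := cong_le_syn hr' hle hcc
      exact hcd (by rw [← Quotient.out_eq c, ← Quotient.out_eq d]; exact Quotient.sound this)
    obtain ⟨p, q, hpq, hnθb⟩ := step1
    obtain ⟨m, gs, zbG, εG, hgs, hchainG⟩ := (hG p q).1 hpq
    -- Step 2: some G-translation separates c,d modulo θb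
    have step2 : ∃ j, ¬ θb (translation (gs j) εG c) (translation (gs j) εG d) := by
      by_contra hall
      push_neg at hall
      exact hnθb (chain_rel hθb hchainG hall)
    obtain ⟨j, hj⟩ := step2
    -- Step 3: transport the F-chain by the translation gs j
    obtain ⟨n, fs, zbF, εF, hfs, hchainF⟩ := hF
    have hcomp := chain_comp hchainF (gs j) εG
    have hall : ∀ i : Fin (n + 1),
        θb (translation (compTerm (gs j) (fs i)) (ilv εG εF) (Quotient.mk s a))
          (translation (compTerm (gs j) (fs i)) (ilv εG εF) (Quotient.mk s b)) := by
      intro i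
      set w := compTerm (gs j) (fs i) with hw
      have hwmem : w ∈ {w : L.Term (ℕ ⊕ Fin 1) | ∃ s ∈ G, ∃ t ∈ F, w = compTerm s t} :=
        ⟨gs j, hgs j, fs i, hfs i, rfl⟩
      set eA : ℕ → A := fun m => (ilv εG εF m).out with heA
      have hθA : θ (translation w eA a) (translation w eA b) := hGF w hwmem eA
      have hcomm : ∀ x : A, Quotient.mk s (translation w eA x) =
          translation w (ilv εG εF) (Quotient.mk s x) := by
        intro x
        have := hom_translation π w eA x
        rw [hπfun] at this
        rw [this]
        congr 1
        funext m
        exact (hπfun (eA m)).trans (Quotient.out_eq _)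
      have := (hmk _ _).2 hθA
      rwa [hcomm a, hcomm b] at this
    exact hj (chain_rel hθb hcomp hall)
end

section
/- The algebra Q_ω is locally finite: every subalgebra of Q_ω generated by a finite subset of its carrier is finite. -/
/-- The carrier of the algebra `Q_ω`: `{0} ⊔ {aᵢ : i ∈ ℕ} ⊔ {bᵢ : i ∈ ℕ}`. -/
inductive Qw : Type
  | zero : Qw
  | a (i : ℕ) : Qw
  | b (i : ℕ) : Qw
  deriving DecidableEq

/-- The operation `⊓` of `Q_ω`: `x ⊓ y = x` if `x = y`, otherwise `0`. -/
def Qw.inf (x y : Qw) : Qw := if x = y then x else Qw.zero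

/-- The operation `·` of `Q_ω`: `aᵢ · b_{i+1} = bᵢ`, and `0` otherwise. -/
def Qw.mul : Qw → Qw → Qw
  | Qw.a i, Qw.b j => if j = i + 1 then Qw.b i else Qw.zero
  | _, _ => Qw.zero

/-- A congruence of `Q_ω`: an equivalence relation compatible with `⊓` and `·`
(and automatically with the constant `0`). -/
def QwCongruence (r : Qw → Qw → Prop) : Prop :=
  Equivalence r ∧
    (∀ x y x' y' : Qw, r x x' → r y y' → r (x.inf y) (x'.inf y')) ∧
    (∀ x y x' y' : Qw, r x x' → r y y' → r (x.mul y) (x'.mul y'))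

/-- Membership in the subalgebra of `Q_ω` generated by `S`: the smallest subset
containing `S ∪ {0}` and closed under `⊓` and `·`. -/
inductive QwGen (S : Set Qw) : Qw → Prop
  | mem {x : Qw} : x ∈ S → QwGen S x
  | zero : QwGen S Qw.zero
  | inf {x y : Qw} : QwGen S x → QwGen S y → QwGen S (x.inf y)
  | mul {x y : Qw} : QwGen S x → QwGen S y → QwGen S (x.mul y)

/-- `Q_ω` is locally finite: the subalgebra generated by any finite subset of the
carrier is finite. -/
theorem stmt_13 (S : Set Qw) (hS : S.Finite) : {x : Qw | QwGen S x}.Finite := by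
  classical
  set N : ℕ := hS.toFinset.sup (fun x => match x with | Qw.b j => j | _ => 0) with hN
  have hb : ∀ j, Qw.b j ∈ S → j ≤ N := by
    intro j hj
    have : Qw.b j ∈ hS.toFinset := hS.mem_toFinset.mpr hj
    simpa using Finset.le_sup (f := fun x => match x with | Qw.b j => j | _ => 0) this
  have hsub : {x : Qw | QwGen S x} ⊆ S ∪ {Qw.zero} ∪ (Qw.b '' Set.Iic N) := by
    intro x hx
    induction hx with
    | mem h => exact Or.inl (Or.inl h)
    | zero => exact Or.inl (Or.inr rfl)
    | inf hx hy ihx ihy =>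
      unfold Qw.inf
      split
      · exact ihx
      · exact Or.inl (Or.inr rfl)
    | @mul u v hx hy ihx ihy =>
      cases u with
      | zero => exact Or.inl (Or.inr rfl)
      | b k => exact Or.inl (Or.inr rfl)
      | a i =>
        cases v with
        | zero => exact Or.inl (Or.inr rfl)
        | a k => exact Or.inl (Or.inr rfl)
        | b j =>
          show (if j = i + 1 then Qw.b i else Qw.zero) ∈ _
          split
          · rename_i hji
            subst hji
            have hi : i ≤ N := by
              rcases ihy with (h | h) | ⟨k, hk, hkk⟩
              · exact Nat.le_of_succ_le (hb _ h)
              · simp at h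
              · have hk1 : k = i + 1 := by injection hkk
                have : k ≤ N := hk
                omega
            exact Or.inr ⟨i, hi, rfl⟩
          · exact Or.inl (Or.inr rfl)
  exact Set.Finite.subset ((hS.union (Set.finite_singleton _)).union
    ((Set.finite_Iic N).image _)) hsub
end

section
/- Equip the carrier Q_ω with the one-point compactification topology at 0 (a set is open iff it omits 0, or it contains 0 and has finite complement). Then both binary operations ⊓ and · of Q_ω are continuous with respect to this topology and its product topology; hence Q_ω with this topology is a Boolean topological algebra. -/
/-- The one-point-compactification topology with condensation point `x0`: a set is open
iff it omits `x0`, or it contains `x0` and has finite complement. -/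
def onePointTop (X : Type*) (x0 : X) : TopologicalSpace X where
  IsOpen U := x0 ∉ U ∨ Uᶜ.Finite
  isOpen_univ := Or.inr (by simp)
  isOpen_inter := by
    rintro U V (hU | hU) hV
    · exact Or.inl fun h => hU h.1
    · rcases hV with hV | hV
      · exact Or.inl fun h => hV h.2
      · refine Or.inr ?_
        rw [Set.compl_inter]
        exact hU.union hV
  isOpen_sUnion := by
    intro S hS
    by_cases h0 : x0 ∈ ⋃₀ S
    · rcases h0 with ⟨U, hUS, hU⟩
      rcases hS U hUS with h | h
      · exact absurd hU h
      · exact Or.inr (h.subset (Set.compl_subset_compl.2 fun x hx => ⟨U, hUS, hx⟩))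
    · exact Or.inl h0

namespace QwProof

local instance tQ : TopologicalSpace Qw := onePointTop Qw Qw.zero

lemma singleton_open {x : Qw} (hx : x ≠ Qw.zero) : IsOpen ({x} : Set Qw) :=
  Or.inl (by simp [Ne.symm hx])

lemma singleton_mem_nhds {x : Qw} (hx : x ≠ Qw.zero) : ({x} : Set Qw) ∈ nhds x :=
  (singleton_open hx).mem_nhds rfl

lemma cofinite_of_open_zero {U : Set Qw} (hU : IsOpen U) (h0 : Qw.zero ∈ U) :
    Uᶜ.Finite := by
  rcases hU with h | h
  · exact absurd h0 h
  · exact h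

lemma open_diff {U V : Set Qw} (hU : IsOpen U) (h0 : Qw.zero ∈ U)
    (hV : V.Finite) : IsOpen (U \ V) := by
  refine Or.inr (((cofinite_of_open_zero hU h0).union hV).subset ?_)
  intro x hx
  by_cases hxU : x ∈ U
  · exact Or.inr (by by_contra h; exact hx ⟨hxU, h⟩)
  · exact Or.inl hxU

lemma diff_mem_nhds_zero {U V : Set Qw} (hU : U ∈ nhds Qw.zero) (hV : V.Finite)
    (h0V : Qw.zero ∉ V) : U \ V ∈ nhds Qw.zero := by
  obtain ⟨U', hU'sub, hU'open, hU'mem⟩ := mem_nhds_iff.mp hU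
  exact mem_nhds_iff.mpr ⟨U' \ V, fun x hx => ⟨hU'sub hx.1, hx.2⟩,
    open_diff hU'open hU'mem hV, hU'mem, h0V⟩

lemma b_inj : Function.Injective Qw.b := fun i j h => by cases h; rfl

lemma cont_inf : Continuous (fun p : Qw × Qw => p.1.inf p.2) := by
  rw [continuous_iff_continuousAt]
  rintro ⟨x, y⟩
  rw [ContinuousAt, nhds_prod_eq]
  intro U hU
  rw [Filter.mem_map, Filter.mem_prod_iff]
  have hmemU : Qw.inf x y ∈ U := mem_of_mem_nhds hU
  by_cases hx : x = Qw.zero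
  · subst hx
    by_cases hy : y = Qw.zero
    · subst hy
      have h0U : Qw.zero ∈ U := by simpa [Qw.inf] using hmemU
      have hU0 : U ∈ nhds Qw.zero := by simpa [Qw.inf] using hU
      refine ⟨U, hU0, U, hU0, ?_⟩
      rintro ⟨v, w⟩ ⟨hv, hw⟩
      simp only [Set.mem_preimage, Qw.inf]
      split_ifs
      · exact hv
      · exact h0U
    · have h0U : Qw.zero ∈ U := by simpa [Qw.inf, Ne.symm hy] using hmemU
      have hU0 : U ∈ nhds Qw.zero := by simpa [Qw.inf] using hU
      refine ⟨U \ {y}, diff_mem_nhds_zero hU0 (Set.finite_singleton y)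
        (by simp [Ne.symm hy]), {y}, singleton_mem_nhds hy, ?_⟩
      rintro ⟨v, w⟩ ⟨hv, hw⟩
      rcases hw with rfl
      simp only [Set.mem_preimage, Qw.inf]
      split_ifs with h
      · exact absurd h (by simpa using hv.2)
      · exact h0U
  · by_cases hy : y = Qw.zero
    · subst hy
      have h0U : Qw.zero ∈ U := by simpa [Qw.inf, hx] using hmemU
      have hU0 : U ∈ nhds Qw.zero := by simpa [Qw.inf, hx] using hU
      refine ⟨{x}, singleton_mem_nhds hx, U \ {x}, diff_mem_nhds_zero hU0
        (Set.finite_singleton x) (by simp [Ne.symm hx]), ?_⟩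
      rintro ⟨v, w⟩ ⟨hv, hw⟩
      rcases hv with rfl
      simp only [Set.mem_preimage, Qw.inf]
      split_ifs with h
      · exact absurd h.symm (by simpa using hw.2)
      · exact h0U
    · refine ⟨{x}, singleton_mem_nhds hx, {y}, singleton_mem_nhds hy, ?_⟩
      rintro ⟨v, w⟩ ⟨hv, hw⟩
      rcases hv with rfl; rcases hw with rfl
      exact hmemU

lemma cont_mul : Continuous (fun p : Qw × Qw => p.1.mul p.2) := by
  rw [continuous_iff_continuousAt]
  rintro ⟨x, y⟩
  rw [ContinuousAt, nhds_prod_eq]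
  intro U hU
  rw [Filter.mem_map, Filter.mem_prod_iff]
  have hmemU : Qw.mul x y ∈ U := mem_of_mem_nhds hU
  cases x with
  | zero =>
    have h0U : Qw.zero ∈ U := by cases y <;> simpa [Qw.mul] using hmemU
    have hU0 : U ∈ nhds Qw.zero := by cases y <;> simpa [Qw.mul] using hU
    obtain ⟨U', hU'sub, hU'open, hU'mem⟩ := mem_nhds_iff.mp hU0
    have hfin : (Qw.b ⁻¹' U'ᶜ).Finite :=
      Set.Finite.preimage (Set.injOn_of_injective b_inj)
        (cofinite_of_open_zero hU'open hU'mem)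
    set F : Set Qw := Qw.a '' (Qw.b ⁻¹' U'ᶜ) with hF
    have hFfin : F.Finite := hfin.image _
    refine ⟨U' \ F, mem_nhds_iff.mpr ⟨U' \ F, le_refl _,
      open_diff hU'open hU'mem hFfin, hU'mem, by simp [hF]⟩,
      Set.univ, Filter.univ_mem, ?_⟩
    rintro ⟨v, w⟩ ⟨hv, -⟩
    simp only [Set.mem_preimage]
    cases v with
    | zero => cases w <;> exact h0U
    | a i =>
      cases w with
      | b j =>
        simp only [Qw.mul]
        split_ifs
        · refine hU'sub ?_
          by_contra hbi
          exact hv.2 ⟨i, hbi, rfl⟩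
        · exact h0U
      | zero => exact h0U
      | a _ => exact h0U
    | b _ => cases w <;> exact h0U
  | a i =>
    cases y with
    | zero =>
      have h0U : Qw.zero ∈ U := hmemU
      have hU0 : U ∈ nhds Qw.zero := hU
      refine ⟨{Qw.a i}, singleton_mem_nhds (by simp), U \ {Qw.b (i+1)},
        diff_mem_nhds_zero hU0 (Set.finite_singleton _) (by simp), ?_⟩
      rintro ⟨v, w⟩ ⟨hv, hw⟩
      rcases hv with rfl
      simp only [Set.mem_preimage]
      cases w with
      | b j =>
        simp only [Qw.mul]
        split_ifs with h
        · subst h; exact absurd rfl hw.2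
        · exact h0U
      | zero => exact h0U
      | a _ => exact h0U
    | a j =>
      refine ⟨{Qw.a i}, singleton_mem_nhds (by simp), {Qw.a j},
        singleton_mem_nhds (by simp), ?_⟩
      rintro ⟨v, w⟩ ⟨hv, hw⟩
      rcases hv with rfl; rcases hw with rfl
      exact hmemU
    | b j =>
      refine ⟨{Qw.a i}, singleton_mem_nhds (by simp), {Qw.b j},
        singleton_mem_nhds (by simp), ?_⟩
      rintro ⟨v, w⟩ ⟨hv, hw⟩
      rcases hv with rfl; rcases hw with rfl
      exact hmemU
  | b i =>
    have h0U : Qw.zero ∈ U := by cases y <;> simpa [Qw.mul] using hmemU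
    refine ⟨{Qw.b i}, singleton_mem_nhds (by simp), Set.univ, Filter.univ_mem, ?_⟩
    rintro ⟨v, w⟩ ⟨hv, -⟩
    rcases hv with rfl
    cases w <;> exact h0U

lemma compact : CompactSpace Qw := by
  constructor
  rw [isCompact_iff_ultrafilter_le_nhds]
  intro f _
  by_cases h : ∃ s : Set Qw, s.Finite ∧ s ∈ f
  · obtain ⟨s, hs, hsf⟩ := h
    obtain ⟨x, -, hx⟩ := Ultrafilter.eq_pure_of_finite_mem hs hsf
    exact ⟨x, trivial, by rw [hx]; exact pure_le_nhds x⟩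
  · push_neg at h
    refine ⟨Qw.zero, trivial, fun s hs => ?_⟩
    obtain ⟨U', hU'sub, hU'open, hU'mem⟩ := mem_nhds_iff.mp hs
    have hsc : sᶜ.Finite :=
      (cofinite_of_open_zero hU'open hU'mem).subset (Set.compl_subset_compl.mpr hU'sub)
    have : sᶜ ∉ f := fun hmem => (h _ hsc hmem).elim
    exact (Ultrafilter.compl_notMem_iff).mp this

lemma t2 : T2Space Qw := by
  refine ⟨fun x y hxy => ?_⟩
  by_cases hx : x = Qw.zero
  · subst hx
    refine ⟨{y}ᶜ, {y}, Or.inr (by simpa using Set.finite_singleton y),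
      singleton_open (fun h => hxy h.symm), by simpa using hxy, rfl, ?_⟩
    simp [Set.disjoint_left]
  · refine ⟨{x}, {x}ᶜ, singleton_open hx,
      Or.inr (by simpa using Set.finite_singleton x), rfl, by simpa using (Ne.symm hxy), ?_⟩
    simp [Set.disjoint_left]

lemma totSep : TotallySeparatedSpace Qw := by
  refine ⟨fun x _ y _ hxy => ?_⟩
  by_cases hx : x = Qw.zero
  · subst hx
    refine ⟨{y}ᶜ, {y}, Or.inr (by simpa using Set.finite_singleton y),
      singleton_open (fun h => hxy h.symm), by simpa using hxy, rfl,
      by intro z _; by_cases h : z = y <;> simp [h], ?_⟩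
    simp [Set.disjoint_left]
  · refine ⟨{x}, {x}ᶜ, singleton_open hx,
      Or.inr (by simpa using Set.finite_singleton x), rfl, by simpa using (Ne.symm hxy),
      by intro z _; by_cases h : z = x <;> simp [h], ?_⟩
    simp [Set.disjoint_left]

lemma totDisc : TotallyDisconnectedSpace Qw := by
  have := totSep
  infer_instance

end QwProof

/-- With the one-point-compactification topology at `0`, the operations `⊓` and `·` of
`Q_ω` are continuous; moreover this topology is Boolean (compact, Hausdorff and totally
disconnected), so `Q_ω` is a Boolean topological algebra. -/
theorem stmt_15 :
    letI : TopologicalSpace Qw := onePointTop Qw Qw.zero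
    Continuous (fun p : Qw × Qw => p.1.inf p.2) ∧
      Continuous (fun p : Qw × Qw => p.1.mul p.2) ∧
      CompactSpace Qw ∧ T2Space Qw ∧ TotallyDisconnectedSpace Qw :=
  ⟨QwProof.cont_inf, QwProof.cont_mul, QwProof.compact, QwProof.t2, QwProof.totDisc⟩
end

section
/- Let Q' be a structure with a constant 0 and a binary operation ∘ satisfying: (i) for all x, y, if x ∘ y ≠ 0 then x ≠ 0 and y ≠ 0; (ii) for all x, y, x', y', if x ∘ y = x' ∘ y' and x ∘ y ≠ 0, then x = x' and y = y'. Equip Q' with the one-point compactification topology at 0 (open sets: those omitting 0, and those containing 0 with finite complement). Then ∘ : Q' × Q' → Q' is continuous. -/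
lemma onePointTop_isOpen {X : Type*} (x0 : X) (s : Set X) :
    @IsOpen X (onePointTop X x0) s ↔ (x0 ∉ s ∨ sᶜ.Finite) := Iff.rfl

/-- Let `Q'` have a constant `0` and a binary operation `∘` such that (i) `x ∘ y ≠ 0`
implies `x ≠ 0` and `y ≠ 0`, and (ii) `x ∘ y = x' ∘ y' ≠ 0` implies `x = x'` and
`y = y'`. Then `∘` is continuous for the one-point-compactification topology at `0`. -/
theorem stmt_16 {Q' : Type*} (z : Q') (op : Q' → Q' → Q')
    (h1 : ∀ x y : Q', op x y ≠ z → x ≠ z ∧ y ≠ z)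
    (h2 : ∀ x y x' y' : Q', op x y = op x' y' → op x y ≠ z → x = x' ∧ y = y') :
    letI : TopologicalSpace Q' := onePointTop Q' z
    Continuous (fun p : Q' × Q' => op p.1 p.2) := by
  letI : TopologicalSpace Q' := onePointTop Q' z
  rw [continuous_def]
  intro U hU
  rw [isOpen_prod_iff]
  intro a b hab
  simp only [Set.mem_preimage] at hab
  by_cases hz : z ∈ U
  · have hUf : Uᶜ.Finite := (onePointTop_isOpen z U).1 hU |>.resolve_left (fun h => h hz)
    set L : Set Q' := {x | ∃ d, op x d ∉ U} with hLdef
    set R : Set Q' := {y | ∃ c, op c y ∉ U} with hRdef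
    have hLf : L.Finite := by
      have hsub : L ⊆ ⋃ u ∈ Uᶜ, {x | ∃ d, op x d = u} := by
        rintro x ⟨d, hd⟩
        exact Set.mem_biUnion hd ⟨d, rfl⟩
      refine Set.Finite.subset (Set.Finite.biUnion hUf fun u hu => ?_) hsub
      apply Set.Subsingleton.finite
      rintro p ⟨dp, hp⟩ q ⟨dq, hq⟩
      refine (h2 p dp q dq (hp.trans hq.symm) ?_).1
      rw [hp]; intro h; exact hu (h ▸ hz)
    have hRf : R.Finite := by
      have hsub : R ⊆ ⋃ u ∈ Uᶜ, {y | ∃ c, op c y = u} := by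
        rintro y ⟨c, hc⟩
        exact Set.mem_biUnion hc ⟨c, rfl⟩
      refine Set.Finite.subset (Set.Finite.biUnion hUf fun u hu => ?_) hsub
      apply Set.Subsingleton.finite
      rintro p ⟨cp, hp⟩ q ⟨cq, hq⟩
      refine (h2 cp p cq q (hp.trans hq.symm) ?_).2
      rw [hp]; intro h; exact hu (h ▸ hz)
    have hzL : z ∉ L := by
      rintro ⟨d, hd⟩
      exact (h1 z d (fun h => hd (h.symm ▸ hz))).1 rfl
    have hzR : z ∉ R := by
      rintro ⟨c, hc⟩
      exact (h1 c z (fun h => hc (h.symm ▸ hz))).2 rfl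
    have hLopen : IsOpen Lᶜ := (onePointTop_isOpen z _).2 (Or.inr (by simpa using hLf))
    have hRopen : IsOpen Rᶜ := (onePointTop_isOpen z _).2 (Or.inr (by simpa using hRf))
    by_cases ha : a = z <;> by_cases hb : b = z
    · refine ⟨Lᶜ, Rᶜ, hLopen, hRopen, ha ▸ hzL, hb ▸ hzR, ?_⟩
      rintro ⟨x, y⟩ ⟨hx, hy⟩
      simp only [Set.mem_preimage]
      by_contra h
      exact hx ⟨y, h⟩
    · refine ⟨Lᶜ, {b}, hLopen, (onePointTop_isOpen z _).2 (Or.inl (by simpa using Ne.symm hb)),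
        ha ▸ hzL, rfl, ?_⟩
      rintro ⟨x, y⟩ ⟨hx, hy⟩
      simp only [Set.mem_singleton_iff] at hy
      simp only [Set.mem_preimage]
      by_contra h
      exact hx ⟨y, h⟩
    · refine ⟨{a}, Rᶜ, (onePointTop_isOpen z _).2 (Or.inl (by simpa using Ne.symm ha)),
        hRopen, rfl, hb ▸ hzR, ?_⟩
      rintro ⟨x, y⟩ ⟨hx, hy⟩
      simp only [Set.mem_singleton_iff] at hx
      simp only [Set.mem_preimage]
      by_contra h
      exact hy ⟨x, h⟩
    · refine ⟨{a}, {b}, (onePointTop_isOpen z _).2 (Or.inl (by simpa using Ne.symm ha)),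
        (onePointTop_isOpen z _).2 (Or.inl (by simpa using Ne.symm hb)), rfl, rfl, ?_⟩
      rintro ⟨x, y⟩ ⟨hx, hy⟩
      simp only [Set.mem_singleton_iff] at hx hy
      simp only [Set.mem_preimage, hx, hy]
      exact hab
  · have hne : op a b ≠ z := fun h => hz (h ▸ hab)
    obtain ⟨ha, hb⟩ := h1 a b hne
    refine ⟨{a}, {b}, (onePointTop_isOpen z _).2 (Or.inl (by simpa using Ne.symm ha)),
      (onePointTop_isOpen z _).2 (Or.inl (by simpa using Ne.symm hb)), rfl, rfl, ?_⟩
    rintro ⟨x, y⟩ ⟨hx, hy⟩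
    simp only [Set.mem_singleton_iff] at hx hy
    simp only [Set.mem_preimage, hx, hy]
    exact hab
end
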